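/- The improper integral (4/π) ∫₀^∞ q^{-3} [π/2 − q − arccot(q)] dq converges and equals −1. -/

import Mathlib

open MeasureTheory Real

/-- `arccot q = arctan (1/q)` for `q > 0`. -/
noncomputable def arccot (q : ℝ) : ℝ := Real.arctan (1 / q)

/-!
On `(0, ∞)` we have `arccot q = π/2 - arctan q`, so the integrand is `(arctan q - q) / q³ ≤ 0`,
which has the elementary primitive `G q = (q - arctan q) / (2 q²) - arctan q / 2`.
The bounds `0 ≤ q - arctan q ≤ q³/3` give `G q → 0` as `q → 0⁺`, while `G q → -π/4` as `q → ∞`.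
Since the derivative has constant sign and `G` has a limit at infinity, the fundamental theorem of
calculus on the half-line yields both integrability and the value `-π/4`.
-/

open Filter Topology Set

namespace Real

lemma arctan_le_self {x : ℝ} (hx : 0 ≤ x) : arctan x ≤ x := by
  have hmono : Monotone fun x : ℝ => x - arctan x := by
    refine monotone_of_deriv_nonneg (differentiable_id.sub differentiable_arctan) fun y => ?_
    have hderiv : HasDerivAt (fun x : ℝ => x - arctan x) (1 - 1 / (1 + y ^ 2)) y :=
      (hasDerivAt_id' y).sub (hasDerivAt_arctan y)
    rw [hderiv.deriv, sub_nonneg]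
    exact div_le_one_of_le₀ (by nlinarith [sq_nonneg y]) (by positivity)
  simpa using hmono hx

lemma sub_pow_three_div_three_le_arctan {x : ℝ} (hx : 0 ≤ x) : x - x ^ 3 / 3 ≤ arctan x := by
  have hmono : Monotone fun x : ℝ => arctan x - x + x ^ 3 / 3 := by
    refine monotone_of_deriv_nonneg
      ((differentiable_arctan.sub differentiable_id).add (by fun_prop)) fun y => ?_
    have hderiv : HasDerivAt (fun x : ℝ => arctan x - x + x ^ 3 / 3) (y ^ 4 / (1 + y ^ 2)) y := by
      refine (((hasDerivAt_arctan y).sub (hasDerivAt_id' y)).add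
        ((hasDerivAt_pow 3 y).div_const 3)).congr_deriv ?_
      have hpos : (0 : ℝ) < 1 + y ^ 2 := by positivity
      field_simp
      ring
    rw [hderiv.deriv]
    positivity
  have := hmono hx
  norm_num at this
  linarith

end Real

lemma arccot_eq_pi_div_two_sub_arctan {q : ℝ} (hq : 0 < q) : arccot q = π / 2 - arctan q := by
  rw [arccot, one_div, arctan_inv_of_pos hq]

-- At `q = 0` this evaluates to `0` via `0 / 0 = 0`, which is also its right limit.
noncomputable def arctanRemainderPrimitive (q : ℝ) : ℝ :=
  (q - arctan q) / (2 * q ^ 2) - arctan q / 2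

lemma arctanRemainderPrimitive_zero : arctanRemainderPrimitive 0 = 0 := by
  simp [arctanRemainderPrimitive]

lemma hasDerivAt_arctanRemainderPrimitive {x : ℝ} (hx : x ≠ 0) :
    HasDerivAt arctanRemainderPrimitive ((arctan x - x) / x ^ 3) x := by
  refine ((((hasDerivAt_id' x).sub (hasDerivAt_arctan x)).div
    ((hasDerivAt_pow 2 x).const_mul 2) (by positivity)).sub
      ((hasDerivAt_arctan x).div_const 2)).congr_deriv ?_
  have hpos : (0 : ℝ) < 1 + x ^ 2 := by positivity
  simp only [Pi.sub_apply]
  field_simp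
  ring

lemma tendsto_arctanRemainderPrimitive_atTop :
    Tendsto arctanRemainderPrimitive atTop (𝓝 (-(π / 4))) := by
  have hinv : Tendsto (fun q : ℝ => q⁻¹) atTop (𝓝 0) := tendsto_inv_atTop_zero
  have harctan : Tendsto arctan atTop (𝓝 (π / 2)) :=
    tendsto_arctan_atTop.mono_right nhdsWithin_le_nhds
  have hlim := ((hinv.sub (harctan.mul (hinv.pow 2))).div_const 2).sub (harctan.div_const 2)
  rw [show -(π / 4) = (0 - π / 2 * 0 ^ 2) / 2 - π / 2 / 2 by ring]
  refine hlim.congr' ?_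
  filter_upwards [eventually_ne_atTop 0] with q hq
  simp only [arctanRemainderPrimitive]
  field_simp

lemma continuousWithinAt_arctanRemainderPrimitive_zero :
    ContinuousWithinAt arctanRemainderPrimitive (Ici 0) 0 := by
  rw [← continuousWithinAt_Ioi_iff_Ici, ContinuousWithinAt, arctanRemainderPrimitive_zero]
  have hquot : Tendsto (fun q : ℝ => (q - arctan q) / (2 * q ^ 2)) (𝓝[>] 0) (𝓝 0) := by
    refine squeeze_zero' (g := fun q : ℝ => q / 6) ?_ ?_ ?_
    · filter_upwards [self_mem_nhdsWithin] with q (hq : 0 < q)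
      exact div_nonneg (sub_nonneg.2 (arctan_le_self hq.le)) (by positivity)
    · filter_upwards [self_mem_nhdsWithin] with q (hq : 0 < q)
      rw [div_le_div_iff₀ (by positivity) (by norm_num)]
      nlinarith [sub_pow_three_div_three_le_arctan hq.le]
    · simpa using (tendsto_id (x := 𝓝[>] (0 : ℝ))).mono_right nhdsWithin_le_nhds |>.div_const 6
  have harctan : Tendsto (fun q => arctan q / 2) (𝓝[>] 0) (𝓝 0) := by
    simpa using ((continuous_arctan.tendsto 0).mono_left nhdsWithin_le_nhds).div_const 2
  have hlim := hquot.sub harctan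
  rwa [sub_zero] at hlim

lemma integrableOn_arctan_sub_self_div_cube_and_integral_eq :
    IntegrableOn (fun q : ℝ => (arctan q - q) / q ^ 3) (Ioi 0) ∧
      ∫ q in Ioi (0 : ℝ), (arctan q - q) / q ^ 3 = -(π / 4) := by
  have hderiv : ∀ x ∈ Ioi (0 : ℝ),
      HasDerivAt arctanRemainderPrimitive ((arctan x - x) / x ^ 3) x :=
    fun x hx => hasDerivAt_arctanRemainderPrimitive (ne_of_gt hx)
  have hnonpos : ∀ x ∈ Ioi (0 : ℝ), (arctan x - x) / x ^ 3 ≤ 0 := fun x (hx : 0 < x) =>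
    div_nonpos_of_nonpos_of_nonneg (sub_nonpos.2 (arctan_le_self hx.le)) (by positivity)
  refine ⟨integrableOn_Ioi_deriv_of_nonpos continuousWithinAt_arctanRemainderPrimitive_zero
    hderiv hnonpos tendsto_arctanRemainderPrimitive_atTop, ?_⟩
  rw [integral_Ioi_of_hasDerivAt_of_nonpos continuousWithinAt_arctanRemainderPrimitive_zero
    hderiv hnonpos tendsto_arctanRemainderPrimitive_atTop, arctanRemainderPrimitive_zero, sub_zero]

theorem integral_J2 :
    IntegrableOn
      (fun q : ℝ => q ^ (-3 : ℤ) * (Real.pi / 2 - q - arccot q)) (Set.Ioi 0) ∧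
    (4 / Real.pi) * ∫ q in Set.Ioi (0 : ℝ),
        q ^ (-3 : ℤ) * (Real.pi / 2 - q - arccot q) = -1 := by
  have hintegrand : EqOn (fun q : ℝ => (arctan q - q) / q ^ 3)
      (fun q : ℝ => q ^ (-3 : ℤ) * (π / 2 - q - arccot q)) (Ioi 0) := fun q (hq : 0 < q) => by
    simp only [arccot_eq_pi_div_two_sub_arctan hq, zpow_neg, zpow_ofNat]
    ring
  obtain ⟨hint, hval⟩ := integrableOn_arctan_sub_self_div_cube_and_integral_eq
  refine ⟨hint.congr_fun hintegrand measurableSet_Ioi, ?_⟩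
  rw [← setIntegral_congr_fun measurableSet_Ioi hintegrand, hval]
  field_simp
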